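/- Let 0 < ε ≤ 1 and let a be a real number. Let B_1 be an m×m diagonal complex matrix with all diagonal entries in the square Q and with the real part of every diagonal entry at most a − ε, and let B_2 be an m'×m' diagonal complex matrix with all diagonal entries in Q and with the real part of every diagonal entry at least a + ε. Then for every m×m' complex matrix A there exists a unique m×m' complex matrix C such that A = B_1 C − C B_2, and this C satisfies ‖C‖ ≤ 2‖A‖/ε². -/

import Mathlib

noncomputable def opNorm {ι κ : Type*} [Fintype ι] [Fintype κ] [DecidableEq κ]
    (A : Matrix ι κ ℂ) : ℝ :=
  ‖LinearMap.toContinuousLinearMap (Matrix.toEuclideanLin A)‖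

def Qsq : Set ℂ := {z : ℂ | |z.re| ≤ 1 ∧ |z.im| ≤ 1}

/-!
Entrywise, `B₁C - CB₂ = A` reads `(d₁ i - d₂ j) C i j = A i j`, which has the unique solution
`C i j = A i j / (d₁ i - d₂ j)`. If `Re d₁ ≤ α < β ≤ Re d₂`, then `1 / z = -∫₀^∞ e^{tz} dt` for
`z = d₁ i - d₂ j` turns this into `C = -∫₀^∞ e^{tB₁} A e^{-tB₂} dt`, and the integrand has
operator norm at most `e^{-(β - α)t} ‖A‖`. Hence `‖C‖ ≤ ‖A‖ / (β - α)`, which for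
`α = a - ε`, `β = a + ε` is `‖A‖ / (2ε) ≤ 2‖A‖ / ε²`.
-/

open MeasureTheory Set Matrix
-- With this norm on matrices, `opNorm A` is `‖A‖` by definition.
open scoped Matrix.Norms.L2Operator

variable {m n : Type*} [Fintype m] [Fintype n]

lemma Matrix.diagonal_mul_sub_mul_diagonal_apply [DecidableEq m] [DecidableEq n] {R : Type*}
    [CommRing R] (d₁ : m → R) (d₂ : n → R) (C : Matrix m n R) (i : m) (j : n) :
    (diagonal d₁ * C - C * diagonal d₂) i j = (d₁ i - d₂ j) * C i j := by
  simp only [sub_apply, diagonal_mul, mul_diagonal]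
  ring

lemma Matrix.eq_diagonal_mul_sub_mul_diagonal_iff [DecidableEq m] [DecidableEq n] {K : Type*}
    [Field K] {d₁ : m → K} {d₂ : n → K} (hd : ∀ i j, d₁ i ≠ d₂ j) (A C : Matrix m n K) :
    A = diagonal d₁ * C - C * diagonal d₂ ↔ C = of fun i j => A i j / (d₁ i - d₂ j) := by
  simp only [← Matrix.ext_iff, diagonal_mul_sub_mul_diagonal_apply, of_apply,
    eq_div_iff (sub_ne_zero.2 (hd _ _)), mul_comm (C _ _), eq_comm (a := A _ _)]

lemma Matrix.integral_apply [DecidableEq n] {X : Type*} [MeasurableSpace X]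
    {μ : Measure X} {F : X → Matrix m n ℂ} (hF : Integrable F μ) (i : m) (j : n) :
    (∫ x, F x ∂μ) i j = ∫ x, F x i j ∂μ :=
  ((entryLinearMap ℂ ℂ i j).toContinuousLinearMap.integral_comp_comm hF).symm

lemma Matrix.norm_diagonal_cexp_le [DecidableEq m] {d : m → ℂ} {α : ℝ} (hd : ∀ i, (d i).re ≤ α)
    {t : ℝ} (ht : 0 ≤ t) : ‖diagonal fun i => Complex.exp (d i * t)‖ ≤ Real.exp (α * t) := by
  rw [l2_opNorm_diagonal, pi_norm_le_iff_of_nonneg (Real.exp_nonneg _)]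
  intro i
  rw [Complex.norm_exp, Complex.re_mul_ofReal]
  exact Real.exp_le_exp.2 (mul_le_mul_of_nonneg_right (hd i) ht)

section Sylvester

variable [DecidableEq m] [DecidableEq n] {α β : ℝ} {d₁ : m → ℂ} {d₂ : n → ℂ}

noncomputable def Matrix.sylvesterIntegrand (d₁ : m → ℂ) (d₂ : n → ℂ) (A : Matrix m n ℂ)
    (t : ℝ) : Matrix m n ℂ :=
  diagonal (fun i => Complex.exp (d₁ i * t)) * A * diagonal (fun j => Complex.exp (-d₂ j * t))

lemma Matrix.sylvesterIntegrand_apply (A : Matrix m n ℂ) (t : ℝ) (i : m) (j : n) :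
    sylvesterIntegrand d₁ d₂ A t i j = Complex.exp ((d₁ i - d₂ j) * t) * A i j := by
  simp only [sylvesterIntegrand, mul_diagonal, diagonal_mul, sub_mul, neg_mul, Complex.exp_sub,
    Complex.exp_neg]
  ring

lemma Matrix.norm_sylvesterIntegrand_le (hd₁ : ∀ i, (d₁ i).re ≤ α)
    (hd₂ : ∀ j, β ≤ (d₂ j).re) (A : Matrix m n ℂ) {t : ℝ} (ht : 0 ≤ t) :
    ‖sylvesterIntegrand d₁ d₂ A t‖ ≤ Real.exp ((α - β) * t) * ‖A‖ := by
  have hd₂' : ∀ j, (-d₂ j).re ≤ -β := fun j => by simpa using hd₂ j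
  calc _ ≤ Real.exp (α * t) * ‖A‖ * Real.exp (-β * t) := by
        grw [sylvesterIntegrand, l2_opNorm_mul, l2_opNorm_mul, norm_diagonal_cexp_le hd₁ ht,
          norm_diagonal_cexp_le hd₂' ht]
    _ = Real.exp ((α - β) * t) * ‖A‖ := by
        rw [mul_right_comm, ← Real.exp_add]; ring_nf

lemma Matrix.integrableOn_sylvesterIntegrand (hαβ : α < β)
    (hd₁ : ∀ i, (d₁ i).re ≤ α) (hd₂ : ∀ j, β ≤ (d₂ j).re) (A : Matrix m n ℂ) :
    IntegrableOn (sylvesterIntegrand d₁ d₂ A) (Ioi 0) := by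
  refine Integrable.mono' ((integrableOn_exp_mul_Ioi (sub_neg.2 hαβ) 0).mul_const ‖A‖)
    (by unfold sylvesterIntegrand; fun_prop : Continuous _).aestronglyMeasurable ?_
  filter_upwards [ae_restrict_mem measurableSet_Ioi] with t ht
  exact norm_sylvesterIntegrand_le hd₁ hd₂ A ht.le

lemma Matrix.of_div_sub_eq_neg_integral (hαβ : α < β) (hd₁ : ∀ i, (d₁ i).re ≤ α)
    (hd₂ : ∀ j, β ≤ (d₂ j).re) (A : Matrix m n ℂ) :
    (of fun i j => A i j / (d₁ i - d₂ j) : Matrix m n ℂ) =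
      -∫ t in Ioi 0, sylvesterIntegrand d₁ d₂ A t := by
  ext i j
  have hre : (d₁ i - d₂ j).re < 0 := by
    rw [Complex.sub_re]; linarith [hd₁ i, hd₂ j]
  rw [neg_apply, Matrix.integral_apply (integrableOn_sylvesterIntegrand hαβ hd₁ hd₂ A)]
  simp only [sylvesterIntegrand_apply, integral_mul_const, integral_exp_mul_complex_Ioi hre,
    of_apply, Complex.ofReal_zero, mul_zero, Complex.exp_zero]
  ring

theorem Matrix.norm_of_div_sub_le (hαβ : α < β) (hd₁ : ∀ i, (d₁ i).re ≤ α)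
    (hd₂ : ∀ j, β ≤ (d₂ j).re) (A : Matrix m n ℂ) :
    ‖(of fun i j => A i j / (d₁ i - d₂ j) : Matrix m n ℂ)‖ ≤ ‖A‖ / (β - α) := by
  rw [of_div_sub_eq_neg_integral hαβ hd₁ hd₂, norm_neg]
  calc _ ≤ ∫ t in Ioi 0, Real.exp ((α - β) * t) * ‖A‖ :=
        norm_integral_le_of_norm_le ((integrableOn_exp_mul_Ioi (sub_neg.2 hαβ) 0).mul_const ‖A‖)
          (by filter_upwards [ae_restrict_mem measurableSet_Ioi] with t ht
              exact norm_sylvesterIntegrand_le hd₁ hd₂ A ht.le)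
    _ = ‖A‖ / (β - α) := by
        rw [integral_mul_const, integral_exp_mul_Ioi (sub_neg.2 hαβ), mul_zero, Real.exp_zero,
          ← neg_sub β α, div_neg]
        ring

end Sylvester

theorem stmt13_general (ε : ℝ) (hε0 : 0 < ε) (hε1 : ε ≤ 1) (a : ℝ) (m m' : ℕ)
    (d₁ : Fin m → ℂ) (hd₁' : ∀ i, (d₁ i).re ≤ a - ε)
    (d₂ : Fin m' → ℂ) (hd₂' : ∀ j, a + ε ≤ (d₂ j).re)
    (A : Matrix (Fin m) (Fin m') ℂ) :
    ∃ C : Matrix (Fin m) (Fin m') ℂ,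
      (A = Matrix.diagonal d₁ * C - C * Matrix.diagonal d₂ ∧
        opNorm C ≤ 2 * opNorm A / ε ^ 2) ∧
      ∀ C' : Matrix (Fin m) (Fin m') ℂ,
        A = Matrix.diagonal d₁ * C' - C' * Matrix.diagonal d₂ → C' = C := by
  have hd : ∀ i j, d₁ i ≠ d₂ j := fun i j h => by
    linarith [hd₁' i, hd₂' j, congrArg Complex.re h]
  refine ⟨of fun i j => A i j / (d₁ i - d₂ j),
    ⟨(eq_diagonal_mul_sub_mul_diagonal_iff hd A _).2 rfl, ?_⟩,
    fun C' => (eq_diagonal_mul_sub_mul_diagonal_iff hd A C').1⟩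
  calc opNorm (of fun i j => A i j / (d₁ i - d₂ j)) ≤ opNorm A / (a + ε - (a - ε)) :=
        norm_of_div_sub_le (by linarith) hd₁' hd₂' A
    _ = opNorm A / (2 * ε) := by ring_nf
    _ ≤ 2 * opNorm A / ε ^ 2 := by
        have hεA : 0 ≤ opNorm A * ε := mul_nonneg (norm_nonneg _) hε0.le
        rw [div_le_div_iff₀ (by positivity) (by positivity)]
        nlinarith [mul_nonneg hεA (sub_nonneg.2 hε1)]

/-- If the diagonal entries of B₁ lie in Q with real part ≤ a − ε and those of B₂ lie in
Q with real part ≥ a + ε (0 < ε ≤ 1), then for every A the equation A = B₁C − CB₂ has a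
unique solution C, and it satisfies ‖C‖ ≤ 2‖A‖/ε². -/
theorem stmt13 (ε : ℝ) (hε0 : 0 < ε) (hε1 : ε ≤ 1) (a : ℝ) (m m' : ℕ)
    (d₁ : Fin m → ℂ) (hd₁ : ∀ i, d₁ i ∈ Qsq) (hd₁' : ∀ i, (d₁ i).re ≤ a - ε)
    (d₂ : Fin m' → ℂ) (hd₂ : ∀ j, d₂ j ∈ Qsq) (hd₂' : ∀ j, a + ε ≤ (d₂ j).re)
    (A : Matrix (Fin m) (Fin m') ℂ) :
    ∃ C : Matrix (Fin m) (Fin m') ℂ,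
      (A = Matrix.diagonal d₁ * C - C * Matrix.diagonal d₂ ∧
        opNorm C ≤ 2 * opNorm A / ε ^ 2) ∧
      ∀ C' : Matrix (Fin m) (Fin m') ℂ,
        A = Matrix.diagonal d₁ * C' - C' * Matrix.diagonal d₂ → C' = C :=
  stmt13_general ε hε0 hε1 a m m' d₁ hd₁' d₂ hd₂' A
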